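/- Let N be a positive integer and (Ω, ℱ, ℙ) a probability space. Let ι be a measurable space, let P : ι → Matrix (Fin N) (Fin N) ℝ be a measurable family of matrices such that P s is symmetric and idempotent for every s ∈ ι, and assume the operator norms ‖P s‖ are uniformly bounded. Let S : Ω → ι and E : Ω → ℝ^N be random variables that are independent, with 𝔼[‖E‖²] < ∞. Set Q = 𝔼[P(S)] (the entrywise expectation, a symmetric positive semidefinite matrix) and let W = Q^{1/2} be its positive semidefinite square root. Then 𝔼[‖P(S) E‖²] = 𝔼[‖W E‖²]. -/

import Mathlib

open MeasureTheory Matrix ProbabilityTheory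

/-!
Both sides are quadratic forms in `E`: `‖P v‖² = vᵀ P v` for an orthogonal projection and
`‖W v‖² = vᵀ (W W) v = vᵀ Q v` for symmetric `W`. Expanding `vᵀ M v` entrywise, independence
factors `𝔼[P(S)ᵢⱼ Eᵢ Eⱼ] = Qᵢⱼ 𝔼[Eᵢ Eⱼ]`; every term is integrable because the entries of an
orthogonal projection lie in `[-1, 1]` and `Eᵢ Eⱼ` is a product of two `L²` functions.
-/

namespace Matrix

variable {n R : Type*} [Fintype n]

theorem IsSymm.mulVec_dotProduct_mulVec_self [CommSemiring R] {A : Matrix n n R} (hA : A.IsSymm)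
    (v : n → R) : A *ᵥ v ⬝ᵥ A *ᵥ v = v ⬝ᵥ (A * A) *ᵥ v := by
  rw [← mulVec_mulVec, dotProduct_mulVec v, ← vecMul_transpose, hA.eq]

theorem abs_apply_le_one_of_isSymm_of_mul_self {A : Matrix n n ℝ} (hA : A.IsSymm)
    (hAA : A * A = A) (i j : n) : |A i j| ≤ 1 := by
  have hle : ∀ l, A i l ^ 2 ≤ A i i := fun l => by
    conv_rhs => rw [← hAA]
    simp only [mul_apply, hA.apply i, ← sq]
    exact Finset.single_le_sum (f := fun l => A i l ^ 2) (fun l _ => sq_nonneg _)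
      (Finset.mem_univ l)
  have hii : A i i ≤ 1 := by nlinarith [hle i]
  exact sq_le_one_iff_abs_le_one _ |>.1 ((hle j).trans hii)

end Matrix

section

variable {Ω n : Type*} [Fintype n] [MeasurableSpace Ω] {μ : Measure Ω} {E : Ω → n → ℝ}

theorem memLp_two_apply_of_integrable_dotProduct_self (hE : AEStronglyMeasurable E μ)
    (hE2 : Integrable (fun ω => E ω ⬝ᵥ E ω) μ) (i : n) : MemLp (fun ω => E ω i) 2 μ := by
  have hEi : AEStronglyMeasurable (fun ω => E ω i) μ :=
    (continuous_apply i).comp_aestronglyMeasurable hE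
  refine (memLp_two_iff_integrable_sq hEi).2 (hE2.mono' (hEi.pow 2) (.of_forall fun ω => ?_))
  rw [Real.norm_of_nonneg (sq_nonneg _), sq]
  exact Finset.single_le_sum (f := fun k => E ω k * E ω k) (fun k _ => mul_self_nonneg _)
    (Finset.mem_univ i)

theorem integrable_apply_mul_apply_of_integrable_dotProduct_self (hE : AEStronglyMeasurable E μ)
    (hE2 : Integrable (fun ω => E ω ⬝ᵥ E ω) μ) (i j : n) :
    Integrable (fun ω => E ω i * E ω j) μ :=
  (memLp_two_apply_of_integrable_dotProduct_self hE hE2 i).integrable_mul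
    (memLp_two_apply_of_integrable_dotProduct_self hE hE2 j)

theorem integral_dotProduct_mulVec_eq_sum {M : Ω → Matrix n n ℝ}
    (hME : ∀ i j, Integrable (fun ω => M ω i j * (E ω i * E ω j)) μ) :
    ∫ ω, E ω ⬝ᵥ M ω *ᵥ E ω ∂μ = ∑ i, ∑ j, ∫ ω, M ω i j * (E ω i * E ω j) ∂μ := by
  have hexpand : ∀ ω, E ω ⬝ᵥ M ω *ᵥ E ω = ∑ i, ∑ j, M ω i j * (E ω i * E ω j) := fun ω => by
    rw [dot_mulVec_eq_sum_sum, Finset.sum_comm]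
    exact Finset.sum_congr rfl fun i _ => Finset.sum_congr rfl fun j _ => by ring
  simp_rw [hexpand]
  rw [integral_finsetSum _ fun i _ => integrable_finsetSum _ fun j _ => hME i j]
  exact Finset.sum_congr rfl fun i _ => integral_finsetSum _ fun j _ => hME i j

theorem integral_dotProduct_mulVec_comp_of_indepFun {ι : Type*} [MeasurableSpace ι]
    {M : ι → Matrix n n ℝ} (hM : ∀ i j, Measurable fun s => M s i j) {c : ℝ}
    (hMc : ∀ s i j, |M s i j| ≤ c) {S : Ω → ι} (hS : Measurable S) (hE : Measurable E)
    (hSE : IndepFun S E μ) (hE2 : Integrable (fun ω => E ω ⬝ᵥ E ω) μ)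
    {Q : Matrix n n ℝ} (hQ : ∀ i j, Q i j = ∫ ω, M (S ω) i j ∂μ) :
    ∫ ω, E ω ⬝ᵥ M (S ω) *ᵥ E ω ∂μ = ∫ ω, E ω ⬝ᵥ Q *ᵥ E ω ∂μ := by
  have hEE := integrable_apply_mul_apply_of_integrable_dotProduct_self hE.aestronglyMeasurable hE2
  have hMS : ∀ i j, Measurable fun ω => M (S ω) i j := fun i j => (hM i j).comp hS
  have hEij : ∀ i j, Measurable fun ω => E ω i * E ω j := fun i j =>
    (hE.eval (a := i)).mul (hE.eval (a := j))
  have hMSE : ∀ i j, Integrable (fun ω => M (S ω) i j * (E ω i * E ω j)) μ := fun i j =>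
    (hEE i j).bdd_mul (hMS i j).aestronglyMeasurable (.of_forall fun ω => hMc (S ω) i j)
  rw [integral_dotProduct_mulVec_eq_sum hMSE,
    integral_dotProduct_mulVec_eq_sum fun i j => (hEE i j).const_mul (Q i j)]
  refine Finset.sum_congr rfl fun i _ => Finset.sum_congr rfl fun j _ => ?_
  have hind : IndepFun (fun ω => M (S ω) i j) (fun ω => E ω i * E ω j) μ :=
    hSE.comp (hM i j) ((measurable_pi_apply i).mul (measurable_pi_apply j))
  rw [integral_const_mul, hQ]
  exact hind.integral_mul_eq_mul_integral (hMS i j).aestronglyMeasurable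
    (hEij i j).aestronglyMeasurable

end

theorem ensemble_projection_weighted_mse_indep_general
    {N : ℕ}
    {Ω : Type*} [MeasurableSpace Ω] (Pr : Measure Ω)
    {ι : Type*} [MeasurableSpace ι]
    (P : ι → Matrix (Fin N) (Fin N) ℝ)
    (hPmeas : ∀ i j, Measurable (fun s => P s i j))
    (hPsymm : ∀ s, (P s).IsSymm)
    (hPidem : ∀ s, P s * P s = P s)
    (S : Ω → ι) (E : Ω → Fin N → ℝ)
    (hS : Measurable S) (hE : Measurable E)
    (hindep : IndepFun S E Pr)
    (hE2 : Integrable (fun ω => (E ω) ⬝ᵥ (E ω)) Pr)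
    (Q : Matrix (Fin N) (Fin N) ℝ)
    (hQ : ∀ i j, Q i j = ∫ ω, P (S ω) i j ∂Pr)
    (W : Matrix (Fin N) (Fin N) ℝ) (hW : W.PosSemidef) (hWQ : W * W = Q) :
    ∫ ω, ((P (S ω)).mulVec (E ω)) ⬝ᵥ ((P (S ω)).mulVec (E ω)) ∂Pr
      = ∫ ω, (W.mulVec (E ω)) ⬝ᵥ (W.mulVec (E ω)) ∂Pr := by
  have hWsymm : W.IsSymm := isHermitian_iff_isSymm.1 hW.isHermitian
  calc ∫ ω, P (S ω) *ᵥ E ω ⬝ᵥ P (S ω) *ᵥ E ω ∂Pr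
      = ∫ ω, E ω ⬝ᵥ P (S ω) *ᵥ E ω ∂Pr := by
        simp_rw [(hPsymm _).mulVec_dotProduct_mulVec_self, hPidem]
    _ = ∫ ω, E ω ⬝ᵥ Q *ᵥ E ω ∂Pr :=
        integral_dotProduct_mulVec_comp_of_indepFun hPmeas
          (fun s => abs_apply_le_one_of_isSymm_of_mul_self (hPsymm s) (hPidem s)) hS hE hindep
          hE2 hQ
    _ = ∫ ω, W *ᵥ E ω ⬝ᵥ W *ᵥ E ω ∂Pr := by
        simp_rw [hWsymm.mulVec_dotProduct_mulVec_self, hWQ]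

/-- **Lemma 1 (ENSURE paper), random error vector version.**  Let `(Ω, Pr)` be a probability
space, `ι` a measurable space and `P : ι → Matrix (Fin N) (Fin N) ℝ` a measurable family of
orthogonal projection matrices (symmetric and idempotent) whose operator norms (as operators
on Euclidean space) are uniformly bounded.  Let `S : Ω → ι` and `E : Ω → ℝ^N` be independent
random variables with `𝔼[‖E‖²] < ∞`.  Let `Q = 𝔼[P(S)]` (entrywise expectation) and let `W`
be its positive semidefinite square root (`W` PSD with `W * W = Q`).  Then
`𝔼[‖P(S) E‖²] = 𝔼[‖W E‖²]`. -/
theorem ensemble_projection_weighted_mse_indep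
    {N : ℕ} (hN : 0 < N)
    {Ω : Type*} [MeasurableSpace Ω] (Pr : Measure Ω) [IsProbabilityMeasure Pr]
    {ι : Type*} [MeasurableSpace ι]
    (P : ι → Matrix (Fin N) (Fin N) ℝ)
    (hPmeas : ∀ i j, Measurable (fun s => P s i j))
    (hPsymm : ∀ s, (P s).IsSymm)
    (hPidem : ∀ s, P s * P s = P s)
    (C : ℝ) (hPbound : ∀ s, ‖Matrix.toEuclideanCLM (𝕜 := ℝ) (P s)‖ ≤ C)
    (S : Ω → ι) (E : Ω → Fin N → ℝ)
    (hS : Measurable S) (hE : Measurable E)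
    (hindep : IndepFun S E Pr)
    (hE2 : Integrable (fun ω => (E ω) ⬝ᵥ (E ω)) Pr)
    (Q : Matrix (Fin N) (Fin N) ℝ)
    (hQ : ∀ i j, Q i j = ∫ ω, P (S ω) i j ∂Pr)
    (W : Matrix (Fin N) (Fin N) ℝ) (hW : W.PosSemidef) (hWQ : W * W = Q) :
    ∫ ω, ((P (S ω)).mulVec (E ω)) ⬝ᵥ ((P (S ω)).mulVec (E ω)) ∂Pr
      = ∫ ω, (W.mulVec (E ω)) ⬝ᵥ (W.mulVec (E ω)) ∂Pr :=
  ensemble_projection_weighted_mse_indep_general Pr P hPmeas hPsymm hPidem S E hS hE hindep hE2 Q hQ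
    W hW hWQ
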